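/- arXiv:1911.00619 — 4 statements merged into one kernel-verified Lean document; each statement's English description precedes it below -/
import Mathlib

section
/- Let p = N(ν, γ²) on ℝ, let Y ⊆ ℝ be a measurable set with μ := ∫_Y p(z) dz > 0, and let q* = 1_Y · p / μ be the truncated density with mean ν_T and variance γ_T². Let q be the posterior density proportional to exp(−(y−z)²/(2σ²)) p(z). Then the KL divergence satisfies D_KL(q* ‖ q) = ((y − ν_T)² + γ_T²)/(2σ²) − (y − ν)²/(2(σ² + γ²)) + (1/2) log(σ²/(σ² + γ²)) − log μ. -/
/-!
On `Y` the prior density cancels in `q* / q`, so `log (q* / q)` is the constant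
`log (p(y) √(2πσ²) / μ)` plus the quadratic `(y - z)² / (2σ²)`. Averaging under `q*` turns
the quadratic into `((y - ν_T)² + γ_T²) / (2σ²)` (squared bias plus variance), and the
constant is evaluated from the closed form of the evidence `p(y) = N(y; ν, σ² + γ²)`.
All integrals involved exist because the Gaussian has moments of every order.
-/

open Real MeasureTheory ProbabilityTheory
open scoped NNReal

lemma log_div_div_mul_exp_neg_div {P M c py : ℝ} (hP : P ≠ 0) (hM : M ≠ 0) (hc : c ≠ 0)
    (hpy : py ≠ 0) (a b : ℝ) :
    log (P / M / (c * exp (-a / b) * P / py)) = log (py / (c * M)) + a / b := by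
  rw [← log_exp (a / b), ← log_mul (by positivity) (exp_ne_zero _), neg_div, exp_neg]
  congr 1
  field_simp

lemma log_inv_sqrt_mul_exp_mul_sqrt {s t : ℝ} (hs : 0 < s) (ht : 0 < t) (a : ℝ) :
    log ((√(2 * π * t))⁻¹ * exp (-a / (2 * t)) * √(2 * π * s)) =
      -a / (2 * t) + 1 / 2 * log (s / t) := by
  have hπ := pi_pos
  rw [log_mul (by positivity) (by positivity), log_mul (by positivity) (exp_ne_zero _), log_exp,
    log_inv, log_sqrt (by positivity), log_sqrt (by positivity), log_div hs.ne' ht.ne',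
    log_mul (by positivity) hs.ne', log_mul (by positivity) ht.ne']
  ring

section QuadraticMoment

variable {m : Measure ℝ} {f : ℝ → ℝ}

lemma integrable_sub_sq_mul (h0 : Integrable f m) (h1 : Integrable (fun z => z * f z) m)
    (h2 : Integrable (fun z => z ^ 2 * f z) m) (y : ℝ) :
    Integrable (fun z => (y - z) ^ 2 * f z) m :=
  (((h0.const_mul (y ^ 2)).sub (h1.const_mul (2 * y))).add h2).congr
    (ae_of_all _ fun z => by simp only [Pi.add_apply, Pi.sub_apply]; ring)

lemma integral_sub_sq_mul (h0 : Integrable f m) (h1 : Integrable (fun z => z * f z) m)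
    (h2 : Integrable (fun z => z ^ 2 * f z) m) (y : ℝ) :
    ∫ z, (y - z) ^ 2 * f z ∂m =
      y ^ 2 * ∫ z, f z ∂m - 2 * y * ∫ z, z * f z ∂m + ∫ z, z ^ 2 * f z ∂m := by
  have h : (fun z => (y - z) ^ 2 * f z) =
      fun z => y ^ 2 * f z - 2 * y * (z * f z) + z ^ 2 * f z := by
    ext z; ring
  rw [h, integral_add _ h2, integral_sub, integral_const_mul, integral_const_mul]
  exacts [h0.const_mul _, h1.const_mul _, (h0.const_mul _).sub (h1.const_mul _)]

lemma integral_div_mul_add_sub_sq_div (h0 : Integrable f m)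
    (h1 : Integrable (fun z => z * f z) m) (h2 : Integrable (fun z => z ^ 2 * f z) m)
    {M : ℝ} (hM : M = ∫ z, f z ∂m) (hM0 : M ≠ 0) (C s y : ℝ) :
    ∫ z, f z / M * (C + (y - z) ^ 2 / s) ∂m =
      C + ((y - M⁻¹ * ∫ z, z * f z ∂m) ^ 2
        + (M⁻¹ * ∫ z, z ^ 2 * f z ∂m - (M⁻¹ * ∫ z, z * f z ∂m) ^ 2)) / s := by
  have h : (fun z => f z / M * (C + (y - z) ^ 2 / s)) =
      fun z => C / M * f z + (M * s)⁻¹ * ((y - z) ^ 2 * f z) := by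
    ext z; ring
  rw [h, integral_add (h0.const_mul _) ((integrable_sub_sq_mul h0 h1 h2 y).const_mul _),
    integral_const_mul, integral_const_mul, integral_sub_sq_mul h0 h1 h2, ← hM]
  field_simp
  ring

end QuadraticMoment

lemma integrable_pow_mul_gaussianPDFReal (m : ℝ) {v : ℝ≥0} (hv : v ≠ 0) (n : ℕ) :
    Integrable (fun x => x ^ n * gaussianPDFReal m v x) := by
  have h : Integrable (fun x : ℝ => x ^ n) (gaussianReal m v) :=
    (integrable_norm_iff (by fun_prop)).1 <| by
      simpa using (memLp_id_gaussianReal (μ := m) (v := v) n).integrable_norm_pow'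
  rw [gaussianReal_of_var_ne_zero _ hv, integrable_withDensity_iff (measurable_gaussianPDF _ _)
    (ae_of_all _ fun _ => gaussianPDF_lt_top)] at h
  simpa only [toReal_gaussianPDF] using h

theorem kl_truncated_posterior_general (ν y γ σ : ℝ) (hγ : 0 < γ) (hσ : 0 < σ)
    (Y : Set ℝ)
    (p : ℝ → ℝ)
    (hp : p = fun t => (Real.sqrt (2 * π * γ ^ 2))⁻¹ * exp (-(t - ν) ^ 2 / (2 * γ ^ 2)))
    (μ νT γT2 py : ℝ)
    (hμ : μ = ∫ z in Y, p z) (hμpos : 0 < μ)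
    (hνT : νT = μ⁻¹ * ∫ z in Y, z * p z)
    (hγT2 : γT2 = μ⁻¹ * (∫ z in Y, z ^ 2 * p z) - νT ^ 2)
    (hpy : py = (Real.sqrt (2 * π * (σ ^ 2 + γ ^ 2)))⁻¹ *
      exp (-(y - ν) ^ 2 / (2 * (σ ^ 2 + γ ^ 2))))
    (q : ℝ → ℝ)
    (hq : q = fun t =>
      (Real.sqrt (2 * π * σ ^ 2))⁻¹ * exp (-(y - t) ^ 2 / (2 * σ ^ 2)) * p t / py) :
    (∫ z in Y, (p z / μ) * Real.log ((p z / μ) / q z)) =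
      ((y - νT) ^ 2 + γT2) / (2 * σ ^ 2) - (y - ν) ^ 2 / (2 * (σ ^ 2 + γ ^ 2))
        + (1 / 2) * Real.log (σ ^ 2 / (σ ^ 2 + γ ^ 2)) - Real.log μ := by
  have hv : (⟨γ ^ 2, sq_nonneg γ⟩ : ℝ≥0) ≠ 0 := by
    simpa [← NNReal.coe_ne_zero] using hγ.ne'
  have hp_gaussian : p = gaussianPDFReal ν ⟨γ ^ 2, sq_nonneg γ⟩ := hp
  have hmoment (n : ℕ) : Integrable (fun z => z ^ n * p z) (volume.restrict Y) :=
    hp_gaussian ▸ (integrable_pow_mul_gaussianPDFReal ν hv n).integrableOn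
  have hc : (√(2 * π * σ ^ 2))⁻¹ ≠ 0 := by have := pi_pos; positivity
  have hpy0 : py ≠ 0 := by rw [hpy]; positivity
  have hlog (z : ℝ) : log (p z / μ / q z) =
      log (py / ((√(2 * π * σ ^ 2))⁻¹ * μ)) + (y - z) ^ 2 / (2 * σ ^ 2) := by
    rw [hq]
    exact log_div_div_mul_exp_neg_div (hp_gaussian ▸ gaussianPDFReal_pos _ _ _ hv).ne'
      hμpos.ne' hc hpy0 _ _
  have hC : log (py / ((√(2 * π * σ ^ 2))⁻¹ * μ)) = -(y - ν) ^ 2 / (2 * (σ ^ 2 + γ ^ 2))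
      + 1 / 2 * log (σ ^ 2 / (σ ^ 2 + γ ^ 2)) - log μ := by
    rw [div_mul_eq_div_div, div_inv_eq_mul, log_div (mul_ne_zero hpy0 (by positivity)) hμpos.ne',
      hpy, log_inv_sqrt_mul_exp_mul_sqrt (by positivity) (by positivity)]
  simp_rw [hlog]
  rw [integral_div_mul_add_sub_sq_div (by simpa using hmoment 0) (by simpa using hmoment 1)
    (hmoment 2) hμ hμpos.ne', ← hνT, ← hγT2, hC]
  ring

/-- KL divergence between the truncated Gaussian `q* = 1_Y · p / μ` and the Gaussian
posterior `q(z) ∝ exp(-(y-z)²/(2σ²)) p(z)`: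
`D_KL(q*‖q) = ((y-ν_T)² + γ_T²)/(2σ²) - (y-ν)²/(2(σ²+γ²)) + ½ log(σ²/(σ²+γ²)) - log μ`. -/
theorem kl_truncated_posterior (ν y γ σ : ℝ) (hγ : 0 < γ) (hσ : 0 < σ)
    (Y : Set ℝ) (hY : MeasurableSet Y)
    (p : ℝ → ℝ)
    (hp : p = fun t => (Real.sqrt (2 * π * γ ^ 2))⁻¹ * exp (-(t - ν) ^ 2 / (2 * γ ^ 2)))
    (μ νT γT2 py : ℝ)
    (hμ : μ = ∫ z in Y, p z) (hμpos : 0 < μ)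
    (hνT : νT = μ⁻¹ * ∫ z in Y, z * p z)
    (hγT2 : γT2 = μ⁻¹ * (∫ z in Y, z ^ 2 * p z) - νT ^ 2)
    (hpy : py = (Real.sqrt (2 * π * (σ ^ 2 + γ ^ 2)))⁻¹ *
      exp (-(y - ν) ^ 2 / (2 * (σ ^ 2 + γ ^ 2))))
    (q : ℝ → ℝ)
    (hq : q = fun t =>
      (Real.sqrt (2 * π * σ ^ 2))⁻¹ * exp (-(y - t) ^ 2 / (2 * σ ^ 2)) * p t / py) :
    (∫ z in Y, (p z / μ) * Real.log ((p z / μ) / q z)) =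
      ((y - νT) ^ 2 + γT2) / (2 * σ ^ 2) - (y - ν) ^ 2 / (2 * (σ ^ 2 + γ ^ 2))
        + (1 / 2) * Real.log (σ ^ 2 / (σ ^ 2 + γ ^ 2)) - Real.log μ :=
  kl_truncated_posterior_general ν y γ σ hγ hσ Y p hp μ νT γT2 py hμ hμpos hνT hγT2 hpy q hq
end

section
/- Fix ν, ν_T, γ, γ_T with 0 < γ_T < γ. The function F(y, σ²) = ((y − ν_T)² + γ_T²)/(2σ²) − (y − ν)²/(2(σ² + γ²)) + (1/2) log(σ²/(σ² + γ²)) over (y, σ²) ∈ ℝ × (0, ∞) attains its minimum at y* = (ν_T γ² − ν γ_T²)/(γ² − γ_T²) and σ*² = γ_T² γ²/(γ² − γ_T²). -/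
open Real

/-!
For fixed `s = σ²`, `F(·, s)` is a quadratic in `y` with leading coefficient
`γ² / (2 s (s + γ²)) > 0`; completing the square bounds it below by
`γT² / (2s) + ½ log (s / (s + γ²)) - (νT - ν)² / (2γ²)`. The inequality `log x ≥ 1 - 1/x` at
`x = γ² s / (γT² (s + γ²))` bounds this in turn by its value at `s = σ*²`, where `x = 1`,
and `y*` is exactly the vertex of the quadratic for `s = σ*²`.
-/

lemma sq_div_sub_sq_div_eq {s a : ℝ} (hs : 0 < s) (ha : 0 < a) (u v y : ℝ) :
    (y - u) ^ 2 / s - (y - v) ^ 2 / (s + a)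
      = a * (y - (u * (s + a) - v * s) / a) ^ 2 / (s * (s + a)) - (u - v) ^ 2 / a := by
  field_simp
  ring

lemma neg_sq_div_le_sq_div_sub_sq_div {s a : ℝ} (hs : 0 < s) (ha : 0 < a) (u v y : ℝ) :
    -((u - v) ^ 2 / a) ≤ (y - u) ^ 2 / s - (y - v) ^ 2 / (s + a) := by
  rw [sq_div_sub_sq_div_eq hs ha]
  have : 0 ≤ a * (y - (u * (s + a) - v * s) / a) ^ 2 / (s * (s + a)) := by positivity
  linarith

lemma one_sub_div_add_log_div_le {a b s : ℝ} (ha : 0 < a) (hb : 0 < b) (hs : 0 < s) :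
    1 - b / a + log (b / a) ≤ b / s + log (s / (s + a)) := by
  have hx : 0 < a * s / (b * (s + a)) := by positivity
  have key := one_sub_inv_le_log_of_pos hx
  rw [inv_div, show a * s / (b * (s + a)) = (s / (s + a)) / (b / a) by field_simp,
    log_div (by positivity) (by positivity)] at key
  have hsplit : b * (s + a) / (a * s) = b / a + b / s := by field_simp
  linarith

/-- The function
`F(y, s2) = ((y-ν_T)² + γ_T²)/(2 s2) - (y-ν)²/(2(s2+γ²)) + ½ log(s2/(s2+γ²))`
over `(y, s2) ∈ ℝ × (0, ∞)` attains its minimum at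
`y* = (ν_T γ² - ν γ_T²)/(γ² - γ_T²)`, `s2* = γ_T² γ²/(γ² - γ_T²)`. -/
theorem kl_parameters_minimizer (ν νT γ γT : ℝ) (hγT : 0 < γT) (hγ : γT < γ) :
    let F : ℝ → ℝ → ℝ := fun y s2 =>
      ((y - νT) ^ 2 + γT ^ 2) / (2 * s2) - (y - ν) ^ 2 / (2 * (s2 + γ ^ 2))
        + (1 / 2) * Real.log (s2 / (s2 + γ ^ 2))
    let ystar : ℝ := (νT * γ ^ 2 - ν * γT ^ 2) / (γ ^ 2 - γT ^ 2)
    let s2star : ℝ := γT ^ 2 * γ ^ 2 / (γ ^ 2 - γT ^ 2)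
    ∀ y s2 : ℝ, 0 < s2 → F ystar s2star ≤ F y s2 := by
  intro F ystar s2star y s2 hs2
  have hγ0 : 0 < γ := hγT.trans hγ
  have ha : 0 < γ ^ 2 := by positivity
  have hb : 0 < γT ^ 2 := by positivity
  have hd : 0 < γ ^ 2 - γT ^ 2 := by nlinarith
  have hratio : s2star / (s2star + γ ^ 2) = γT ^ 2 / γ ^ 2 := by
    simp only [s2star]
    field_simp
    ring
  have hvalue : F ystar s2star
      = (-((νT - ν) ^ 2 / γ ^ 2) + (1 - γT ^ 2 / γ ^ 2 + log (γT ^ 2 / γ ^ 2))) / 2 := by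
    simp only [F, hratio]
    simp only [ystar, s2star]
    field_simp
    ring
  have hsplit : F y s2 = ((y - νT) ^ 2 / s2 - (y - ν) ^ 2 / (s2 + γ ^ 2)
      + (γT ^ 2 / s2 + log (s2 / (s2 + γ ^ 2)))) / 2 := by
    simp only [F, mul_inv, div_eq_mul_inv]
    ring
  rw [hvalue, hsplit]
  linarith [neg_sq_div_le_sq_div_sub_sq_div hs2 ha νT ν y, one_sub_div_add_log_div_le ha hb hs2]
end

section
/- The variance of a standard normal distribution truncated to a nonempty interval [a, b] (with a < b, possibly infinite endpoints but not both infinite unless the interval is proper) is strictly less than 1. -/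
/-!
Let `ν = μ[|s]` be the standard normal law `μ`, with density `φ`, conditioned on `s = [a, b]`,
and let `m` be its mean. Since `φ' = -x φ`, the function `φ(x) (x - m)` has derivative
`φ(x) (1 - (x - m) x)`, so
`1 - Var ν = ∫ (1 - (x - m) x) dν = μ(s)⁻¹ ∫ₛ φ(x) (1 - (x - m) x) dx`
is a boundary term, `μ(s)⁻¹ (φ(b) (b - m) + φ(a) (m - a))`, in which an infinite endpoint
contributes `0`. As `a < m < b`, each finite endpoint contributes a positive amount, and at least
one endpoint is finite.
-/

open MeasureTheory ProbabilityTheory Real Set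
open scoped NNReal

section General

variable {Ω : Type*} [MeasurableSpace Ω]

lemma integral_cond_eq_inv_mul_setIntegral (μ : Measure Ω) (s : Set Ω) (f : Ω → ℝ) :
    ∫ x, f x ∂μ[|s] = (μ.real s)⁻¹ * ∫ x in s, f x ∂μ := by
  rw [ProbabilityTheory.cond, integral_smul_measure, smul_eq_mul, ENNReal.toReal_inv,
    measureReal_def]

lemma MeasureTheory.MemLp.cond {μ : Measure Ω} {s : Set Ω} {f : Ω → ℝ} {p : ENNReal}
    (hf : MemLp f p μ) (hs : μ s ≠ 0) : MemLp f p μ[|s] :=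
  (hf.restrict s).smul_measure (ENNReal.inv_ne_top.2 hs)

lemma integral_lt_of_ae_le_of_measure_preimage_eq_zero {ν : Measure Ω} [IsProbabilityMeasure ν]
    {f : Ω → ℝ} {r : ℝ} (hf : Integrable f ν) (hle : ∀ᵐ x ∂ν, f x ≤ r)
    (hr : ν (f ⁻¹' {r}) = 0) : ∫ x, f x ∂ν < r := by
  have hsupp : Function.support (fun x => r - f x) = (f ⁻¹' {r})ᶜ := by
    ext x; simp [sub_eq_zero, eq_comm]
  have hpos : 0 < ∫ x, (r - f x) ∂ν := by
    rw [integral_pos_iff_support_of_nonneg_ae (hle.mono fun x hx => sub_nonneg.2 hx)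
      ((integrable_const r).sub hf), hsupp]
    have hcompl := measure_univ_le_add_compl (f ⁻¹' {r}) (μ := ν)
    rw [hr, zero_add, measure_univ] at hcompl
    exact zero_lt_one.trans_le hcompl
  rw [integral_sub (integrable_const r) hf, integral_const, probReal_univ, one_smul] at hpos
  linarith

end General

lemma one_sub_variance_id_eq_integral {ν : Measure ℝ} [IsProbabilityMeasure ν]
    (h : MemLp id 2 ν) :
    1 - Var[id; ν] = ∫ x, (1 - (x - ∫ y, y ∂ν) * x) ∂ν := by
  have h1 : Integrable (fun x : ℝ => x) ν := h.integrable one_le_two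
  have h2 : Integrable (fun x : ℝ => x ^ 2) ν := h.integrable_sq
  have hexpand : (fun x => 1 - (x - ∫ y, y ∂ν) * x) = fun x => 1 + (∫ y, y ∂ν) * x - x ^ 2 := by
    ext x; ring
  rw [variance_eq_sub h, hexpand,
    integral_sub ((integrable_const 1).fun_add (h1.const_mul _)) h2,
    integral_add (integrable_const 1) (h1.const_mul _), integral_const_mul]
  simp only [Pi.pow_apply, id_eq, pow_two, integral_const, probReal_univ, smul_eq_mul, mul_one]
  ring

lemma hasDerivAt_gaussianPDFReal (μ : ℝ) (v : ℝ≥0) (x : ℝ) :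
    HasDerivAt (gaussianPDFReal μ v) (-(x - μ) / v * gaussianPDFReal μ v x) x := by
  have h := ((((hasDerivAt_id' x).sub_const μ).fun_pow 2).fun_neg.div_const
    (2 * (v : ℝ))).exp.const_mul (√(2 * π * v))⁻¹
  rw [gaussianPDFReal_def]
  refine h.congr_deriv ?_
  by_cases hv : (v : ℝ) = 0
  · simp [hv]
  · field_simp
    ring

lemma integrable_gaussianPDFReal_mul {μ : ℝ} {v : ℝ≥0} (hv : v ≠ 0) {f : ℝ → ℝ}
    (hf : Integrable f (gaussianReal μ v)) :
    Integrable (fun x => gaussianPDFReal μ v x * f x) := by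
  rw [gaussianReal_of_var_ne_zero μ hv, integrable_withDensity_iff_integrable_smul'
    (measurable_gaussianPDF μ v) (ae_of_all _ fun _ => gaussianPDF_lt_top)] at hf
  simpa [smul_eq_mul] using hf

lemma setIntegral_gaussianReal_eq_setIntegral_mul {μ : ℝ} {v : ℝ≥0} (hv : v ≠ 0) {s : Set ℝ}
    (hs : MeasurableSet s) (f : ℝ → ℝ) :
    ∫ x in s, f x ∂gaussianReal μ v = ∫ x in s, gaussianPDFReal μ v x * f x := by
  rw [← integral_indicator hs, ← integral_indicator hs, integral_gaussianReal_eq_integral_smul hv]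
  congr 1 with x
  by_cases hx : x ∈ s <;> simp [hx]

lemma cond_gaussianReal_singleton {μ : ℝ} {v : ℝ≥0} (hv : v ≠ 0) (s : Set ℝ) (r : ℝ) :
    (gaussianReal μ v)[|s] {r} = 0 :=
  cond_absolutelyContinuous (gaussianReal_absolutelyContinuous μ hv volume_singleton)

lemma hasDerivAt_gaussianPDFReal_mul_sub (m x : ℝ) :
    HasDerivAt (fun y => gaussianPDFReal 0 1 y * (y - m))
      (gaussianPDFReal 0 1 x * (1 - (x - m) * x)) x := by
  refine ((hasDerivAt_gaussianPDFReal 0 1 x).mul ((hasDerivAt_id' x).sub_const m)).congr_deriv ?_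
  simp only [NNReal.coe_one, div_one, sub_zero]
  ring

lemma integrable_gaussianPDFReal_mul_sub (m : ℝ) :
    Integrable (fun x => gaussianPDFReal 0 1 x * (x - m)) :=
  integrable_gaussianPDFReal_mul one_ne_zero
    (((memLp_id_gaussianReal 1).integrable le_rfl).sub (integrable_const m))

/- `φ(x) (1 - (x - m) x)`, the derivative of `φ(x) (x - m)` by Stein's identity `φ' = -x φ`, is
called the Stein integrand in the names below. -/
lemma integrable_gaussianPDFReal_mul_stein (m : ℝ) :
    Integrable (fun x => gaussianPDFReal 0 1 x * (1 - (x - m) * x)) := by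
  have h := memLp_id_gaussianReal (μ := 0) (v := 1) 2
  refine integrable_gaussianPDFReal_mul one_ne_zero ?_
  refine (((integrable_const 1).add ((h.integrable one_le_two).const_mul m)).sub
    h.integrable_sq).congr (ae_of_all _ fun x => ?_)
  simp only [Pi.add_apply, Pi.sub_apply, id]
  ring

lemma integral_Iic_gaussianPDFReal_mul_stein (m r : ℝ) :
    ∫ x in Iic r, gaussianPDFReal 0 1 x * (1 - (x - m) * x)
      = gaussianPDFReal 0 1 r * (r - m) := by
  have hderiv := fun x (_ : x ∈ Iic r) => hasDerivAt_gaussianPDFReal_mul_sub m x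
  rw [integral_Iic_of_hasDerivAt_of_tendsto' hderiv
    (integrable_gaussianPDFReal_mul_stein m).integrableOn
    (tendsto_zero_of_hasDerivAt_of_integrableOn_Iic hderiv
      (integrable_gaussianPDFReal_mul_stein m).integrableOn
      (integrable_gaussianPDFReal_mul_sub m).integrableOn), sub_zero]

lemma integral_Ici_gaussianPDFReal_mul_stein (m r : ℝ) :
    ∫ x in Ici r, gaussianPDFReal 0 1 x * (1 - (x - m) * x)
      = gaussianPDFReal 0 1 r * (m - r) := by
  have hderiv := fun x (_ : x ∈ Ici r) => hasDerivAt_gaussianPDFReal_mul_sub m x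
  rw [integral_Ici_eq_integral_Ioi, integral_Ioi_of_hasDerivAt_of_tendsto' hderiv
    (integrable_gaussianPDFReal_mul_stein m).integrableOn
    (tendsto_zero_of_hasDerivAt_of_integrableOn_Ioi (fun x hx => hderiv x (mem_Ici_of_Ioi hx))
      (integrable_gaussianPDFReal_mul_stein m).integrableOn
      (integrable_gaussianPDFReal_mul_sub m).integrableOn)]
  ring

lemma integral_Icc_gaussianPDFReal_mul_stein (m : ℝ) {r r' : ℝ} (h : r ≤ r') :
    ∫ x in Icc r r', gaussianPDFReal 0 1 x * (1 - (x - m) * x)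
      = gaussianPDFReal 0 1 r' * (r' - m) + gaussianPDFReal 0 1 r * (m - r) := by
  rw [integral_Icc_eq_integral_Ioc, ← intervalIntegral.integral_of_le h,
    intervalIntegral.integral_eq_sub_of_hasDerivAt
      (fun x _ => hasDerivAt_gaussianPDFReal_mul_sub m x)
      (integrable_gaussianPDFReal_mul_stein m).intervalIntegrable]
  ring

section Truncation

variable {s : Set ℝ} (hs : MeasurableSet s) (hpos : 0 < gaussianReal 0 1 s)
include hs hpos

lemma variance_cond_gaussianReal_lt_one
    (h : 0 < ∫ x in s, gaussianPDFReal 0 1 x * (1 - (x - ∫ y, y ∂(gaussianReal 0 1)[|s]) * x)) :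
    Var[id; (gaussianReal 0 1)[|s]] < 1 := by
  have := cond_isProbabilityMeasure (μ := gaussianReal 0 1) hpos.ne'
  have hvar := one_sub_variance_id_eq_integral ((memLp_id_gaussianReal 2).cond hpos.ne')
  rw [integral_cond_eq_inv_mul_setIntegral,
    setIntegral_gaussianReal_eq_setIntegral_mul one_ne_zero hs] at hvar
  have hmass : 0 < (gaussianReal 0 1).real s := ENNReal.toReal_pos hpos.ne' (measure_ne_top _ _)
  linarith [mul_pos (inv_pos.2 hmass) h]

lemma integral_cond_gaussianReal_lt {r : ℝ} (hsub : s ⊆ Iic r) :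
    ∫ x, x ∂(gaussianReal 0 1)[|s] < r := by
  have := cond_isProbabilityMeasure (μ := gaussianReal 0 1) hpos.ne'
  exact integral_lt_of_ae_le_of_measure_preimage_eq_zero
    (((memLp_id_gaussianReal 1).cond hpos.ne').integrable le_rfl)
    ((ae_cond_mem hs).mono fun x hx => hsub hx) (cond_gaussianReal_singleton one_ne_zero s r)

lemma lt_integral_cond_gaussianReal {r : ℝ} (hsub : s ⊆ Ici r) :
    r < ∫ x, x ∂(gaussianReal 0 1)[|s] := by
  have := cond_isProbabilityMeasure (μ := gaussianReal 0 1) hpos.ne'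
  have hneg := integral_lt_of_ae_le_of_measure_preimage_eq_zero (f := fun x => -x) (r := -r)
    (((memLp_id_gaussianReal 1).cond hpos.ne').integrable le_rfl).neg
    ((ae_cond_mem hs).mono fun x hx => neg_le_neg (hsub hx))
    (by simpa using cond_gaussianReal_singleton one_ne_zero s r)
  rw [integral_neg] at hneg
  linarith

end Truncation

lemma variance_cond_Iic_lt_one {r : ℝ} (hpos : 0 < gaussianReal 0 1 (Iic r)) :
    Var[id; (gaussianReal 0 1)[|Iic r]] < 1 := by
  refine variance_cond_gaussianReal_lt_one measurableSet_Iic hpos ?_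
  rw [integral_Iic_gaussianPDFReal_mul_stein]
  exact mul_pos (gaussianPDFReal_pos 0 1 r one_ne_zero)
    (sub_pos.2 (integral_cond_gaussianReal_lt measurableSet_Iic hpos subset_rfl))

lemma variance_cond_Ici_lt_one {r : ℝ} (hpos : 0 < gaussianReal 0 1 (Ici r)) :
    Var[id; (gaussianReal 0 1)[|Ici r]] < 1 := by
  refine variance_cond_gaussianReal_lt_one measurableSet_Ici hpos ?_
  rw [integral_Ici_gaussianPDFReal_mul_stein]
  exact mul_pos (gaussianPDFReal_pos 0 1 r one_ne_zero)
    (sub_pos.2 (lt_integral_cond_gaussianReal measurableSet_Ici hpos subset_rfl))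

lemma variance_cond_Icc_lt_one {r r' : ℝ} (hpos : 0 < gaussianReal 0 1 (Icc r r')) :
    Var[id; (gaussianReal 0 1)[|Icc r r']] < 1 := by
  refine variance_cond_gaussianReal_lt_one measurableSet_Icc hpos ?_
  have hr := lt_integral_cond_gaussianReal measurableSet_Icc hpos fun _ hx => hx.1
  have hr' := integral_cond_gaussianReal_lt measurableSet_Icc hpos fun _ hx => hx.2
  rw [integral_Icc_gaussianPDFReal_mul_stein _ (hr.trans hr').le]
  exact add_pos (mul_pos (gaussianPDFReal_pos 0 1 r' one_ne_zero) (sub_pos.2 hr'))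
    (mul_pos (gaussianPDFReal_pos 0 1 r one_ne_zero) (sub_pos.2 hr))

theorem variance_truncated_stdNormal_lt_one_general (a b : EReal)
    (hproper : a ≠ ⊥ ∨ b ≠ ⊤)
    (hpos : 0 < (gaussianReal 0 1) {x : ℝ | a ≤ (x : EReal) ∧ (x : EReal) ≤ b}) :
    variance id
      (ProbabilityTheory.cond (gaussianReal 0 1)
        {x : ℝ | a ≤ (x : EReal) ∧ (x : EReal) ≤ b}) < 1 := by
  induction a using EReal.rec with
  | top => simp at hpos
  | bot =>
    induction b using EReal.rec with
    | bot => simp at hpos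
    | top => simp at hproper
    | coe r' =>
      simpa [Iic_def] using variance_cond_Iic_lt_one (by simpa [Iic_def] using hpos)
  | coe r =>
    induction b using EReal.rec with
    | bot => simp at hpos
    | top => simpa [Ici_def] using variance_cond_Ici_lt_one (by simpa [Ici_def] using hpos)
    | coe r' =>
      simpa [Icc_def] using variance_cond_Icc_lt_one (by simpa [Icc_def] using hpos)

/-- The variance of a standard normal distribution truncated to a nonempty proper
interval `[a, b]` (endpoints possibly infinite, but not both) is strictly
less than `1`. -/
theorem variance_truncated_stdNormal_lt_one (a b : EReal) (hab : a < b)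
    (hproper : a ≠ ⊥ ∨ b ≠ ⊤)
    (hpos : 0 < (gaussianReal 0 1) {x : ℝ | a ≤ (x : EReal) ∧ (x : EReal) ≤ b}) :
    variance id
      (ProbabilityTheory.cond (gaussianReal 0 1)
        {x : ℝ | a ≤ (x : EReal) ∧ (x : EReal) ≤ b}) < 1 :=
  variance_truncated_stdNormal_lt_one_general a b hproper hpos
end

section
/- With y* = ‖v‖ φ_T/(1 − ω_T²) + β and σ*² = ‖v‖² ω_T²/(1 − ω_T²), where φ_T and ω_T² are the mean and variance of the truncated standard normal q₁* (and ω_T² < 1), the Bayesian posterior p(y*|x₁)p₁(x₁)/p(y*) equals the Gaussian N(φ_T, ω_T²). -/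
/-! Conjugacy: a Gaussian likelihood `N(y; a t + b, s)` times a standard normal prior on `t`
factors as the evidence `N(y; b, a² + s)` times the Gaussian `N(t; a (y - b)/(a² + s), s/(a² + s))`,
so the posterior is that Gaussian. For `y = y*`, `s = σ*²` the evidence variance is
`‖v‖²/(1 - ω_T²)`, and the posterior mean and variance reduce to `φ_T` and `ω_T²`. -/

open Real MeasureTheory ProbabilityTheory
open scoped NNReal

lemma gaussianPDFReal_affine_mul_standard (a b y t : ℝ) {s : ℝ≥0} (hs : s ≠ 0) :
    gaussianPDFReal (a * t + b) s y * gaussianPDFReal 0 1 t =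
      gaussianPDFReal b (a ^ 2 + s).toNNReal y *
        gaussianPDFReal (a * (y - b) / (a ^ 2 + s)) (s / (a ^ 2 + s)).toNNReal t := by
  have hs_pos : (0 : ℝ) < s := by positivity
  have hev : 0 < a ^ 2 + s := by positivity
  simp only [gaussianPDFReal, Real.coe_toNNReal _ hev.le,
    Real.coe_toNNReal _ (div_pos hs_pos hev).le, NNReal.coe_one]
  have hnorm : √(2 * π * s) * √(2 * π * 1) =
      √(2 * π * (a ^ 2 + s)) * √(2 * π * (s / (a ^ 2 + s))) := by
    rw [← sqrt_mul (by positivity), ← sqrt_mul (by positivity)]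
    congr 1
    field_simp
  -- completing the square in `t`
  have hexp : -(y - (a * t + b)) ^ 2 / (2 * s) + -(t - 0) ^ 2 / (2 * 1) =
      -(y - b) ^ 2 / (2 * (a ^ 2 + s)) +
        -(t - a * (y - b) / (a ^ 2 + s)) ^ 2 / (2 * (s / (a ^ 2 + s))) := by
    field_simp
    ring
  calc _ = (√(2 * π * s) * √(2 * π * 1))⁻¹ *
        exp (-(y - (a * t + b)) ^ 2 / (2 * s) + -(t - 0) ^ 2 / (2 * 1)) := by
        rw [mul_inv, exp_add]; ring
    _ = _ := by rw [hnorm, hexp, mul_inv, exp_add]; ring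

lemma div_integral_gaussianPDFReal_affine_mul_standard (a b y x : ℝ) {s : ℝ≥0} (hs : s ≠ 0) :
    gaussianPDFReal (a * x + b) s y * gaussianPDFReal 0 1 x /
        ∫ t, gaussianPDFReal (a * t + b) s y * gaussianPDFReal 0 1 t =
      gaussianPDFReal (a * (y - b) / (a ^ 2 + s)) (s / (a ^ 2 + s)).toNNReal x := by
  have hs_pos : (0 : ℝ) < s := by positivity
  have hev : 0 < a ^ 2 + s := by positivity
  simp_rw [gaussianPDFReal_affine_mul_standard a b y _ hs, integral_const_mul,
    integral_gaussianPDFReal_eq_one _ (Real.toNNReal_pos.2 (div_pos hs_pos hev)).ne', mul_one]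
  exact mul_div_cancel_left₀ _ (gaussianPDFReal_pos _ _ _ (Real.toNNReal_pos.2 hev).ne').ne'

lemma gaussianPDFReal_zero_one_eq_rpow (t : ℝ) :
    gaussianPDFReal 0 1 t = (2 * π) ^ (-(1 : ℝ) / 2) * exp (-t ^ 2 / 2) := by
  rw [gaussianPDFReal, NNReal.coe_one, mul_one, sub_zero, show -(1 : ℝ) / 2 = -(1 / 2) by ring,
    rpow_neg (by positivity), ← sqrt_eq_rpow, mul_one]

/-- With the optimal parameters `y* = ‖v‖φ_T/(1-ω_T²) + β` and
`σ*² = ‖v‖²ω_T²/(1-ω_T²)` (where `φ_T`, `ω_T²` are the mean and variance of the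
truncated standard normal, `0 < ω_T² < 1`), the Bayesian posterior
`p(y*|x₁)p₁(x₁)/p(y*)` equals the Gaussian `N(φ_T, ω_T²)`. -/
theorem optimal_posterior_is_truncated_moment_gaussian (nv β φT ωT2 : ℝ)
    (hnv : 0 < nv) (hωT2 : 0 < ωT2) (hωT2' : ωT2 < 1)
    (p₁ : ℝ → ℝ) (hp₁ : p₁ = fun t => (2 * π) ^ (-(1 : ℝ) / 2) * exp (-t ^ 2 / 2))
    (ystar σstar2 : ℝ)
    (hystar : ystar = nv * φT / (1 - ωT2) + β)
    (hσstar2 : σstar2 = nv ^ 2 * ωT2 / (1 - ωT2))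
    (lik : ℝ → ℝ)
    (hlik : lik = fun t =>
      (Real.sqrt (2 * π * σstar2))⁻¹ * exp (-(ystar - (nv * t + β)) ^ 2 / (2 * σstar2)))
    (py : ℝ) (hpy : py = ∫ t : ℝ, lik t * p₁ t) (x : ℝ) :
    lik x * p₁ x / py =
      (Real.sqrt (2 * π * ωT2))⁻¹ * exp (-(x - φT) ^ 2 / (2 * ωT2)) := by
  have hω : 0 < 1 - ωT2 := by linarith
  have hσ : 0 < σstar2 := by rw [hσstar2]; positivity
  have hlik_pdf : lik = fun t => gaussianPDFReal (nv * t + β) σstar2.toNNReal ystar := by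
    rw [hlik]; funext t; rw [gaussianPDFReal, coe_toNNReal _ hσ.le]
  have hp₁_pdf : p₁ = gaussianPDFReal 0 1 := by
    rw [hp₁]; funext t; rw [gaussianPDFReal_zero_one_eq_rpow]
  have hevidence : nv ^ 2 + σstar2.toNNReal = nv ^ 2 / (1 - ωT2) := by
    rw [coe_toNNReal _ hσ.le, hσstar2]; field_simp; ring
  have hmean : nv * (ystar - β) / (nv ^ 2 + σstar2.toNNReal) = φT := by
    rw [hevidence, hystar]; field_simp; ring
  have hvar : ((σstar2.toNNReal : ℝ) / (nv ^ 2 + σstar2.toNNReal)) = ωT2 := by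
    rw [hevidence, coe_toNNReal _ hσ.le, hσstar2]; field_simp
  rw [hpy, hlik_pdf, hp₁_pdf, div_integral_gaussianPDFReal_affine_mul_standard _ _ _ _
    (Real.toNNReal_pos.2 hσ).ne', hmean, hvar, gaussianPDFReal, coe_toNNReal _ hωT2.le]
end
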